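/- arXiv:1002.4374 — 3 statements merged into one kernel-verified Lean document; each statement's English description precedes it below -/
import Mathlib

section
/- Let A be an additive commutative monoid that is cancellative, zero-sum-free (a + b = 0 implies a = b = 0), and such that every element of A has only finitely many representations as an ordered sum of two elements of A. Set Δ = {(a, n) ∈ A × ℤ : a ≠ 0, or a = 0 and n ≥ 0}. Let S ⊆ Δ ∖ {(0,0)} be a Laurent subset. Then every γ ∈ A × ℤ admits only finitely many decompositions γ = γ₁ + ⋯ + γ_k as an ordered sum (over all lengths k ≥ 1) with every γᵢ ∈ S. -/
/-!
Fix `γ = (a, n)` and let `D` be the finite set of summands `b` of `a` (those with `b + c = a`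
for some `c`). In a decomposition `γ = γ₁ + ⋯ + γ_k` every first component lies in `D`, so the
Laurent property gives one lower bound `C ≤ 0` for all second components. Reading the first
components from right to left, each nonzero one strictly enlarges the set of summands of the
partial sum (by cancellativity and zero-sum-freeness), so at most `|D|` of them are nonzero; the
others have positive second components because `S` avoids `(0, 0)`. Comparing second components
with `n` bounds their number, hence `k`, and then also each second component from above. So all
decompositions are lists of bounded length over a finite set.
-/

/-- `S ⊆ A × ℤ` is Laurent if for every `a ∈ A` the set `{n : (a, n) ∈ S}` is bounded below. -/
def IsLaurent {A : Type*} (S : Set (A × ℤ)) : Prop :=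
  ∀ a : A, BddBelow {n : ℤ | (a, n) ∈ S}

/-- The cone `Δ = {(a, n) : a ≠ 0, or a = 0 and n ≥ 0} ⊆ A × ℤ`. -/
def Delta (A : Type*) [AddCommMonoid A] : Set (A × ℤ) :=
  {x | x.1 ≠ 0 ∨ (x.1 = 0 ∧ 0 ≤ x.2)}

theorem List.finite_length_le_of_forall_mem {α : Type*} {E : Set α} (hE : E.Finite) (K : ℕ) :
    {l : List α | l.length ≤ K ∧ ∀ x ∈ l, x ∈ E}.Finite := by
  have := hE.to_subtype
  refine ((List.finite_length_le E K).image (List.map (↑))).subset ?_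
  rintro l ⟨hK, hl⟩
  lift l to List E using hl
  exact ⟨l, by simpa using hK, rfl⟩

theorem List.countP_add_countP_not_mul_le_sum_map {α : Type*} (l : List α) (p : α → Bool)
    (f : α → ℤ) {C : ℤ} (hp : ∀ x ∈ l, p x → 1 ≤ f x) (hC : ∀ x ∈ l, ¬p x → C ≤ f x) :
    (l.countP p : ℤ) + l.countP (fun x => !p x) * C ≤ (l.map f).sum := by
  induction l with
  | nil => simp
  | cons x t ih =>
    have ih := ih (fun y hy => hp y (List.mem_cons_of_mem x hy))
      (fun y hy => hC y (List.mem_cons_of_mem x hy))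
    have hpx := hp x List.mem_cons_self
    have hCx := hC x List.mem_cons_self
    cases hx : p x <;> simp [hx] at hpx hCx ⊢ <;> linarith

theorem List.length_le_of_countP_not_le {α : Type*} (l : List α) (p : α → Bool) (f : α → ℤ)
    {C : ℤ} {N : ℕ} (hC : C ≤ 0) (hN : l.countP (fun x => !p x) ≤ N)
    (hp : ∀ x ∈ l, p x → 1 ≤ f x) (hlow : ∀ x ∈ l, C ≤ f x) :
    l.length ≤ N + ((l.map f).sum - N * C).toNat := by
  have hsum := l.countP_add_countP_not_mul_le_sum_map p f hp fun x hx _ => hlow x hx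
  have hNC : (N : ℤ) * C ≤ l.countP (fun x => !p x) * C :=
    mul_le_mul_of_nonpos_right (by exact_mod_cast hN) hC
  have hsplit := l.length_eq_countP_add_countP p
  simp only [Bool.not_eq_true, Bool.decide_eq_false] at hsplit
  omega

theorem List.le_sum_sub_mul_of_forall_le {l : List ℤ} {x C : ℤ} {K : ℕ} (hx : x ∈ l)
    (hC : C ≤ 0) (hlow : ∀ y ∈ l, C ≤ y) (hK : l.length ≤ K) : x ≤ l.sum - K * C := by
  have hsum := List.sum_erase hx
  have hrest := List.card_nsmul_le_sum (l.erase x) C fun y hy => hlow y (List.mem_of_mem_erase hy)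
  have hlen : (l.erase x).length ≤ K := by rw [List.length_erase_of_mem hx]; omega
  have hKC : (K : ℤ) * C ≤ (l.erase x).length * C :=
    mul_le_mul_of_nonpos_right (by exact_mod_cast hlen) hC
  rw [nsmul_eq_mul] at hrest
  linarith

theorem IsLaurent.exists_nonpos_forall_le {A : Type*} {S : Set (A × ℤ)} (hS : IsLaurent S)
    {D : Set A} (hD : D.Finite) : ∃ C ≤ 0, ∀ x ∈ S, x.1 ∈ D → C ≤ x.2 := by
  obtain ⟨C, hC⟩ := hD.bddBelow_biUnion.2 fun b _ => hS b
  exact ⟨min C 0, min_le_right _ _, fun x hx hxD =>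
    (min_le_left _ _).trans (hC (Set.mem_biUnion hxD hx))⟩

theorem one_le_snd_of_mem_delta_diff_zero {A : Type*} [AddCommMonoid A] {x : A × ℤ}
    (hx : x ∈ Delta A \ {(0, 0)}) (h0 : x.1 = 0) : 1 ≤ x.2 := by
  obtain ⟨hΔ | ⟨-, hnonneg⟩, hne⟩ := hx
  · exact absurd h0 hΔ
  · have : x.2 ≠ 0 := fun h => hne (Prod.ext h0 h)
    omega

section Summands

variable {A : Type*} [AddCancelCommMonoid A]

def summands (a : A) : Set A := {b | ∃ c, b + c = a}

theorem mem_summands_self (a : A) : a ∈ summands a := ⟨0, add_zero a⟩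

theorem mem_summands_sum_of_mem {l : List A} {x : A} (hx : x ∈ l) : x ∈ summands l.sum := by
  classical exact ⟨(l.erase x).sum, List.sum_erase hx⟩

theorem summands_finite (hfin : ∀ a : A, {p : A × A | p.1 + p.2 = a}.Finite) (a : A) :
    (summands a).Finite :=
  ((hfin a).image Prod.fst).subset fun b ⟨c, hc⟩ => ⟨(b, c), hc, rfl⟩

theorem summands_subset_summands_add (x a : A) : summands a ⊆ summands (x + a) :=
  fun b ⟨c, hc⟩ => ⟨c + x, by rw [← hc, add_comm x, add_assoc]⟩

theorem summands_ssubset_summands_add (hzsf : ∀ a b : A, a + b = 0 → a = 0 ∧ b = 0)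
    {x : A} (hx : x ≠ 0) (a : A) : summands a ⊂ summands (x + a) := by
  refine (Set.ssubset_iff_of_subset (summands_subset_summands_add x a)).2
    ⟨x + a, mem_summands_self _, ?_⟩
  rintro ⟨c, hc⟩
  rw [add_right_comm, add_comm, add_eq_left] at hc
  exact hx (hzsf x c hc).1

theorem countP_ne_zero_le_ncard_summands [DecidableEq A]
    (hzsf : ∀ a b : A, a + b = 0 → a = 0 ∧ b = 0) :
    ∀ l : List A, (summands l.sum).Finite → l.countP (· ≠ 0) ≤ (summands l.sum).ncard
  | [], _ => by simp
  | x :: t, hfin => by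
    rw [List.sum_cons] at hfin ⊢
    have ih := countP_ne_zero_le_ncard_summands hzsf t
      (hfin.subset (summands_subset_summands_add x _))
    by_cases hx : x = 0
    · subst hx
      simpa using ih
    · have := Set.ncard_lt_ncard (summands_ssubset_summands_add hzsf hx t.sum) hfin
      simp only [List.countP_cons, ne_eq, hx, not_false_eq_true, decide_true, if_true] at ih ⊢
      omega

end Summands

/-- Let `A` be a cancellative, zero-sum-free additive commutative monoid in
which every element has only finitely many representations as an ordered sum of two
elements, and let `S ⊆ Δ \ {(0,0)}` be a Laurent subset.  Then every `γ ∈ A × ℤ` admits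
only finitely many decompositions `γ = γ₁ + ⋯ + γ_k` (ordered sums over all lengths
`k ≥ 1`, here encoded as nonempty lists) with every `γᵢ ∈ S`. -/
theorem stmt5 {A : Type*} [AddCancelCommMonoid A]
    (hzsf : ∀ a b : A, a + b = 0 → a = 0 ∧ b = 0)
    (hfin : ∀ a : A, {p : A × A | p.1 + p.2 = a}.Finite)
    (S : Set (A × ℤ)) (hSsub : S ⊆ Delta A \ {(0, 0)}) (hS : IsLaurent S)
    (γ : A × ℤ) :
    {l : List (A × ℤ) | l ≠ [] ∧ (∀ x ∈ l, x ∈ S) ∧ l.sum = γ}.Finite := by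
  classical
  obtain ⟨a, n⟩ := γ
  have hD := summands_finite hfin a
  obtain ⟨C, hC0, hC⟩ := hS.exists_nonpos_forall_le hD
  set N := (summands a).ncard
  set K := N + (n - N * C).toNat
  refine (List.finite_length_le_of_forall_mem
    (hD.prod (Set.finite_Icc C (n - K * C))) K).subset ?_
  rintro l ⟨-, hlS, hsum⟩
  have hfst : (l.map Prod.fst).sum = a := by
    simpa using (map_list_sum (AddMonoidHom.fst A ℤ) l).symm.trans (congrArg _ hsum)
  have hsnd : (l.map Prod.snd).sum = n := by
    simpa using (map_list_sum (AddMonoidHom.snd A ℤ) l).symm.trans (congrArg _ hsum)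
  have hmemD : ∀ x ∈ l, x.1 ∈ summands a := fun x hx =>
    hfst ▸ mem_summands_sum_of_mem (List.mem_map_of_mem hx)
  have hlow : ∀ x ∈ l, C ≤ x.2 := fun x hx => hC x (hlS x hx) (hmemD x hx)
  have hnonzero : l.countP (fun x => !decide (x.1 = 0)) ≤ N := by
    simpa [List.countP_map, Function.comp_def, hfst] using
      countP_ne_zero_le_ncard_summands hzsf (l.map Prod.fst) (hfst ▸ hD)
  have hzero : ∀ x ∈ l, decide (x.1 = 0) → 1 ≤ x.2 := fun x hx h0 =>
    one_le_snd_of_mem_delta_diff_zero (hSsub (hlS x hx)) (of_decide_eq_true h0)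
  have hlen : l.length ≤ K := by
    simpa [hsnd] using l.length_le_of_countP_not_le _ Prod.snd hC0 hnonzero hzero hlow
  refine ⟨hlen, fun x hx => ⟨hmemD x hx, hlow x hx, ?_⟩⟩
  simpa [hsnd] using List.le_sum_sub_mul_of_forall_le (List.mem_map_of_mem hx) hC0
    (List.forall_mem_map.2 hlow) (by simpa using hlen)
end

section
/- Fix a positive integer d ≥ 1, and suppose given rational numbers aₙ for n ∈ ℤ satisfying aₙ = a₋ₙ and a_{n+d} = aₙ for all n ∈ ℤ. Then the power series Σ_{n≥0} n aₙ qⁿ ∈ ℚ⟦q⟧ is the Taylor expansion at q = 0 of a rational function f(q) ∈ ℚ(q) that is invariant under the substitution q ↦ 1/q, i.e. f(1/q) = f(q) as rational functions. -/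
/-!
Periodicity of `a` gives `(1 - q^d)² · Σ n aₙ qⁿ = N(q)` with `N(q) = Σ_{n ≤ 2d} min(n, 2d - n) aₙ qⁿ`:
the factor `(1 - q^d)²` acts as a second difference with step `d` on the linearly growing
coefficients `n aₙ`, leaving the tent `min(n, 2d - n)`. The symmetry `aₙ = a₋ₙ` together with
periodicity makes `N` palindromic of width `2d`, as is `(1 - q^d)²`, and a quotient of two
palindromes of the same width is invariant under `q ↦ 1/q`.
-/

open Polynomial

namespace RatFunc

variable {K : Type*} [Field K]

theorem X_pow_mul_eval₂_inv_X (p : K[X]) {m : ℕ} (hp : p.natDegree ≤ m) :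
    X ^ m * p.eval₂ (algebraMap K K⟮X⟯) X⁻¹ = algebraMap K[X] K⟮X⟯ (p.reflect m) := by
  let : Invertible (X⁻¹ : K⟮X⟯) := invertibleOfNonzero (inv_ne_zero X_ne_zero)
  rw [← eval₂_reflect_mul_pow _ _ m p hp, invOf_eq_inv, inv_inv, inv_pow, mul_left_comm,
    mul_inv_cancel₀ (pow_ne_zero _ X_ne_zero), mul_one, ← aeval_def,
    aeval_X_left_eq_algebraMap]

theorem eval₂RingHom_inv_X_injective :
    Function.Injective (eval₂RingHom (algebraMap K K⟮X⟯) X⁻¹) := by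
  refine (injective_iff_map_eq_zero _).2 fun p hp => ?_
  have h := X_pow_mul_eval₂_inv_X p le_rfl
  rw [coe_eval₂RingHom] at hp
  rwa [hp, mul_zero, eq_comm, map_eq_zero_iff _ (algebraMap_injective K),
    reflect_eq_zero_iff] at h

-- `eval` reduces fractions first, so this needs the injectivity of evaluation at `X⁻¹`.
theorem eval_inv_X_div (p q : K[X]) :
    eval (algebraMap K K⟮X⟯) X⁻¹ (algebraMap _ _ p / algebraMap _ _ q) =
      p.eval₂ (algebraMap K K⟮X⟯) X⁻¹ / q.eval₂ (algebraMap K K⟮X⟯) X⁻¹ :=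
  have h := nonZeroDivisors_le_comap_nonZeroDivisors_of_injective _ eval₂RingHom_inv_X_injective
  (liftRingHom_apply _ h _).symm.trans (liftRingHom_apply_div _ h p q)

theorem eval_inv_X_div_of_reflect_eq {p q : K[X]} {m : ℕ} (hp : p.natDegree ≤ m)
    (hq : q.natDegree ≤ m) (hpr : p.reflect m = p) (hqr : q.reflect m = q) :
    eval (algebraMap K K⟮X⟯) X⁻¹ (algebraMap _ _ p / algebraMap _ _ q) =
      algebraMap _ _ p / algebraMap _ _ q := by
  rw [eval_inv_X_div, ← mul_div_mul_left _ _ (pow_ne_zero m X_ne_zero),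
    X_pow_mul_eval₂_inv_X p hp, X_pow_mul_eval₂_inv_X q hq, hpr, hqr]

end RatFunc

section OneSubXPow

variable {R : Type*} [CommRing R]

theorem one_sub_X_pow_ne_zero [Nontrivial R] {d : ℕ} (hd : d ≠ 0) : (1 - X ^ d : R[X]) ≠ 0 := by
  rw [← neg_sub, neg_ne_zero, ← C_1]
  exact X_pow_sub_C_ne_zero (Nat.pos_of_ne_zero hd) 1

theorem natDegree_one_sub_X_pow_le (d : ℕ) : (1 - X ^ d : R[X]).natDegree ≤ d :=
  (natDegree_sub_le _ _).trans (by simpa using natDegree_X_pow_le d)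

theorem reflect_one_sub_X_pow_sq (d : ℕ) :
    ((1 - X ^ d) ^ 2 : R[X]).reflect (2 * d) = (1 - X ^ d) ^ 2 := by
  rw [sq, two_mul, reflect_mul _ _ (natDegree_one_sub_X_pow_le d) (natDegree_one_sub_X_pow_le d),
    reflect_sub, reflect_one, reflect_monomial, revAt_le le_rfl, Nat.sub_self, pow_zero]
  ring

end OneSubXPow

section TentPolynomial

variable {R : Type*} [CommRing R] {d : ℕ} {a : ℤ → R}

noncomputable def tentPolynomial (d : ℕ) (a : ℤ → R) : R[X] :=
  ∑ n ∈ Finset.range (2 * d + 1), C ((min n (2 * d - n) : ℕ) * a n) * X ^ n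

-- Truncated subtraction makes the tent `min n (2 * d - n)` vanish for `n ≥ 2 * d`.
theorem coeff_tentPolynomial (n : ℕ) :
    (tentPolynomial d a).coeff n = (min n (2 * d - n) : ℕ) * a n := by
  rw [tentPolynomial, finsetSum_coeff]
  simp only [coeff_C_mul_X_pow, Finset.sum_ite_eq, Finset.mem_range]
  split_ifs with hn
  · rfl
  · rw [show min n (2 * d - n) = 0 by omega, Nat.cast_zero, zero_mul]

theorem natDegree_tentPolynomial_le : (tentPolynomial d a).natDegree ≤ 2 * d :=
  natDegree_le_iff_coeff_eq_zero.2 fun n hn => by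
    rw [coeff_tentPolynomial, show min n (2 * d - n) = 0 by omega, Nat.cast_zero, zero_mul]

theorem reflect_tentPolynomial (ha : Function.Periodic a d) (he : Function.Even a) :
    (tentPolynomial d a).reflect (2 * d) = tentPolynomial d a := by
  ext n
  rw [coeff_reflect]
  rcases le_or_gt n (2 * d) with hn | hn
  · have hsym : a ((2 * d - n : ℕ) : ℤ) = a n := by
      have h2d : Function.Periodic a (2 * d) := by simpa using ha.nat_mul 2
      rw [Nat.cast_sub hn, Nat.cast_mul, Nat.cast_ofNat, h2d.sub_eq', he]
    rw [revAt_le hn, coeff_tentPolynomial, coeff_tentPolynomial, hsym,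
      show min (2 * d - n) (2 * d - (2 * d - n)) = min n (2 * d - n) by omega]
  · rw [revAt_eq_self_of_lt hn]

theorem coeff_X_pow_mul_mk_of_periodic {m : ℕ} (ha : Function.Periodic a m) (k : ℕ) :
    PowerSeries.coeff k (PowerSeries.X ^ m * PowerSeries.mk fun n : ℕ => (n : R) * a n) =
      ((k - m : ℕ) : R) * a k := by
  rw [PowerSeries.coeff_X_pow_mul']
  split_ifs with hk
  · rw [PowerSeries.coeff_mk, Nat.cast_sub (R := ℤ) hk, ha.sub_eq]
  · rw [Nat.sub_eq_zero_of_le (by omega), Nat.cast_zero, zero_mul]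

theorem one_sub_X_pow_sq_mul_mk (ha : Function.Periodic a d) :
    (1 - PowerSeries.X ^ d) ^ 2 * PowerSeries.mk (fun n : ℕ => (n : R) * a n) =
      (tentPolynomial d a : PowerSeries R) := by
  set S := PowerSeries.mk fun n : ℕ => (n : R) * a n
  have h2d : Function.Periodic a (2 * d : ℕ) := by simpa using ha.nat_mul 2
  ext k
  have htent : min k (2 * d - k) + 2 * (k - d) = k + (k - 2 * d) := by omega
  have htent' := congrArg (Nat.cast : ℕ → R) htent
  push_cast at htent'
  calc PowerSeries.coeff k ((1 - PowerSeries.X ^ d) ^ 2 * S)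
      = PowerSeries.coeff k S - (PowerSeries.coeff k (PowerSeries.X ^ d * S)
          + PowerSeries.coeff k (PowerSeries.X ^ d * S))
          + PowerSeries.coeff k (PowerSeries.X ^ (2 * d) * S) := by
        rw [← map_add, ← map_sub, ← map_add]
        congr 1
        ring
    _ = (tentPolynomial d a).coeff k := by
        rw [coeff_X_pow_mul_mk_of_periodic ha, coeff_X_pow_mul_mk_of_periodic h2d,
          PowerSeries.coeff_mk, coeff_tentPolynomial]
        linear_combination -a k * htent'
    _ = _ := (coeff_coe _ _).symm

end TentPolynomial

theorem ofPowerSeries_eq_coe_div {K : Type*} [Field K] {S : PowerSeries K} {p q : K[X]}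
    (hq : q ≠ 0) (h : (q : PowerSeries K) * S = p) :
    HahnSeries.ofPowerSeries ℤ K S =
      ((algebraMap K[X] (RatFunc K) p / algebraMap K[X] (RatFunc K) q : RatFunc K) :
        LaurentSeries K) := by
  rw [RatFunc.algebraMap_apply_div,
    eq_div_iff ((map_ne_zero_iff _ (algebraMap_hahnSeries_injective ℤ)).2 hq),
    algebraMap_hahnSeries_apply, algebraMap_hahnSeries_apply, ← map_mul, mul_comm, h]

/-- Fix `d ≥ 1` and rational numbers `aₙ` (`n ∈ ℤ`) with `aₙ = a₋ₙ` and
`a_{n+d} = aₙ` for all `n`.  Then the power series `Σ_{n ≥ 0} n aₙ qⁿ ∈ ℚ⟦q⟧` is the Taylor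
expansion at `q = 0` of a rational function `f(q) ∈ ℚ(q)` (equality being taken inside the
field of Laurent series `ℚ⸨q⸩`, which contains both `ℚ⟦q⟧` and the rational functions whose
denominator does not vanish at `0`), and `f` is invariant under `q ↦ 1/q`:
`f(1/q) = f(q)` as rational functions (`f(1/q)` being `f` evaluated at `X⁻¹ ∈ ℚ(q)`). -/
theorem stmt7 (d : ℕ) (hd : 1 ≤ d) (a : ℤ → ℚ)
    (hsym : ∀ n : ℤ, a n = a (-n)) (hper : ∀ n : ℤ, a (n + (d : ℤ)) = a n) :
    ∃ f : RatFunc ℚ,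
      (HahnSeries.ofPowerSeries ℤ ℚ) (PowerSeries.mk fun n : ℕ => (n : ℚ) * a (n : ℤ)) =
        (f : LaurentSeries ℚ) ∧
      RatFunc.eval (algebraMap ℚ (RatFunc ℚ)) (RatFunc.X)⁻¹ f = f := by
  have ha : Function.Periodic a d := hper
  have he : Function.Even a := fun n => (hsym n).symm
  refine ⟨algebraMap _ _ (tentPolynomial d a) / algebraMap _ _ ((1 - X ^ d : ℚ[X]) ^ 2), ?_, ?_⟩
  · refine ofPowerSeries_eq_coe_div (pow_ne_zero 2 (one_sub_X_pow_ne_zero (by omega))) ?_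
    push_cast
    exact one_sub_X_pow_sq_mul_mk ha
  -- The statement's `algebraMap ℚ (RatFunc ℚ)` comes from `DivisionRing.toRatAlgebra`, not from
  -- the `RatFunc` algebra instance; ring homs out of `ℚ` are unique.
  · convert RatFunc.eval_inv_X_div_of_reflect_eq natDegree_tentPolynomial_le
      (natDegree_pow_le_of_le 2 (natDegree_one_sub_X_pow_le d))
      (reflect_tentPolynomial ha he) (reflect_one_sub_X_pow_sq d) using 2
    exact Subsingleton.elim _ _
end

section
/- Let B be a complex unital Banach algebra, let D : B → B be a continuous derivation (a bounded linear map with D(xy) = D(x)y + xD(y) for all x, y), and let a, b ∈ B and n ∈ ℤ satisfy D(a) = 0 and D(b) = n·a·b. Then Dᵏ(b) = nᵏ aᵏ b for every k ≥ 0, and consequently exp(D)(b) = exp(n·a)·b, where exp(D) is the exponential of D in the Banach algebra of bounded linear operators on B and exp(n·a) is the exponential of n·a in B. -/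
/-!
Since `D a = 0`, the Leibniz rule gives `D (a ^ k * b) = a ^ k * D b = n • (a ^ (k + 1) * b)`,
so `Dᵏ b = (n • a) ^ k * b`. Evaluation at `b` and right multiplication by `b` are continuous
linear maps, so they carry the exponential series of `D` and of `n • a` to the same series
`∑ (k!)⁻¹ • Dᵏ b`, whence `exp D b = exp (n • a) * b`.
-/

open NormedSpace

section Leibniz

variable {R B : Type*} [Semiring R] [Ring B] [TopologicalSpace B] [Module R B]
  {D : B →L[R] B} (hder : ∀ x y : B, D (x * y) = D x * y + x * D y)
include hder

theorem map_one_eq_zero_of_leibniz : D 1 = 0 := by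
  simpa using hder 1 1

theorem map_pow_eq_zero_of_leibniz {a : B} (ha : D a = 0) (k : ℕ) : D (a ^ k) = 0 := by
  induction k with
  | zero => simpa using map_one_eq_zero_of_leibniz hder
  | succ k ih => rw [pow_succ, hder, ih, ha, zero_mul, mul_zero, add_zero]

theorem pow_apply_eq_pow_mul_of_leibniz {a b : B} (ha : D a = 0) (hb : D b = a * b) (k : ℕ) :
    (D ^ k) b = a ^ k * b := by
  induction k with
  | zero => simp
  | succ k ih =>
    rw [pow_succ', mul_apply_eq_comp, ih, hder, map_pow_eq_zero_of_leibniz hder ha,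
      hb, zero_mul, zero_add, ← mul_assoc, ← pow_succ]

end Leibniz

theorem exp_apply_eq_exp_mul_of_pow_apply {𝕂 B : Type*} [RCLike 𝕂] [NormedRing B]
    [NormedAlgebra 𝕂 B] [CompleteSpace B] {D : B →L[𝕂] B} {b c : B}
    (hD : ∀ k : ℕ, (D ^ k) b = c ^ k * b) : exp D b = exp c * b := by
  have hexpD := (exp_series_hasSum_exp' (𝕂 := 𝕂) D).mapL (ContinuousLinearMap.apply 𝕂 B b)
  have hexpc := (exp_series_hasSum_exp' (𝕂 := 𝕂) c).mapL ((ContinuousLinearMap.mul 𝕂 B).flip b)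
  simp only [ContinuousLinearMap.apply_apply, smul_apply, hD, ← smul_mul_assoc] at hexpD
  exact hexpD.unique hexpc

/-- Let `B` be a complex unital Banach algebra, `D : B → B` a continuous
derivation, and `a b ∈ B`, `n ∈ ℤ` with `D a = 0` and `D b = n·a·b`.  Then
`Dᵏ b = nᵏ aᵏ b` for every `k ≥ 0`, and `exp(D) b = exp(n·a) · b`, where `exp D` is the
exponential in the Banach algebra of bounded operators on `B` and `exp (n·a)` the
exponential in `B`. -/
theorem stmt8 {B : Type*} [NormedRing B] [NormedAlgebra ℂ B] [CompleteSpace B]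
    (D : B →L[ℂ] B) (hder : ∀ x y : B, D (x * y) = D x * y + x * D y)
    (a b : B) (n : ℤ) (ha : D a = 0) (hb : D b = n • (a * b)) :
    (∀ k : ℕ, (D ^ k) b = (n ^ k) • (a ^ k * b)) ∧
      (NormedSpace.exp D) b = NormedSpace.exp (n • a) * b := by
  have hna : D (n • a) = 0 := by rw [map_zsmul, ha, smul_zero]
  have hnb : D b = n • a * b := by rw [hb, smul_mul_assoc]
  have hpow := pow_apply_eq_pow_mul_of_leibniz hder hna hnb
  refine ⟨fun k => ?_, exp_apply_eq_exp_mul_of_pow_apply hpow⟩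
  rw [hpow, smul_pow, smul_mul_assoc]
end
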